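/- arXiv:2202.06898 — 2 statements merged into one kernel-verified Lean document; each statement's English description precedes it below -/
import Mathlib

section
/- Let (N,v) be the matching game on a finite simple graph G=(V,E) with positive edge weights w. The core of (N,v) is non-empty if and only if the maximum weight of a matching in G equals the maximum weight of a half-matching in G. -/
open scoped Classical
open Finset

namespace MatchingGames

variable {V : Type*}

/-- `M` is a matching of the graph `G`: a set of edges of `G` that are pairwise
vertex-disjoint. -/
def IsMatching (G : SimpleGraph V) (M : Finset (Sym2 V)) : Prop :=
  (∀ e ∈ M, e ∈ G.edgeSet) ∧
    ∀ e ∈ M, ∀ f ∈ M, e ≠ f → ∀ v : V, v ∈ e → v ∉ f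

/-- every endpoint of every edge of `M` belongs to the coalition `S`, i.e. `M` is a
set of edges of the induced subgraph `G[S]`. -/
def EdgesIn (S : Finset V) (M : Finset (Sym2 V)) : Prop :=
  ∀ e ∈ M, ∀ v : V, v ∈ e → v ∈ S

/-- the weight `w(M)` of a set of edges `M`. -/
noncomputable def mWeight (w : Sym2 V → ℝ) (M : Finset (Sym2 V)) : ℝ :=
  ∑ e ∈ M, w e

/-- the value `v(S)` of a coalition `S` in the matching game on `(G,w)`:
the maximum weight of a matching of the induced subgraph `G[S]`. -/
noncomputable def matchVal (G : SimpleGraph V) (w : Sym2 V → ℝ) (S : Finset V) : ℝ :=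
  sSup {t | ∃ M : Finset (Sym2 V), IsMatching G M ∧ EdgesIn S M ∧ t = mWeight w M}

/-- `x` is a core allocation of the cooperative game with value function `v`:
`x(N) = v(N)` and `x(S) ≥ v(S)` for every coalition `S`. -/
def InCore [Fintype V] (v : Finset V → ℝ) (x : V → ℝ) : Prop :=
  (∑ i, x i) = v Finset.univ ∧ ∀ S : Finset V, v S ≤ ∑ i ∈ S, x i

/-- `f` is a fractional matching of `G`: it is supported on the edges of `G`, takes
values in `[0,1]`, and the values on the edges at any vertex sum to at most `1`. -/
def IsFractionalMatching [Fintype V] [DecidableEq V] (G : SimpleGraph V)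
    (f : Sym2 V → ℝ) : Prop :=
  (∀ e, e ∉ G.edgeSet → f e = 0) ∧ (∀ e, 0 ≤ f e ∧ f e ≤ 1) ∧
    ∀ i : V, (∑ e ∈ Finset.univ.filter (fun e : Sym2 V => i ∈ e), f e) ≤ 1

/-- a half-matching is a fractional matching taking values in `{0, 1/2, 1}`. -/
def IsHalfMatching [Fintype V] [DecidableEq V] (G : SimpleGraph V)
    (f : Sym2 V → ℝ) : Prop :=
  IsFractionalMatching G f ∧ ∀ e, f e = 0 ∨ f e = 1 / 2 ∨ f e = 1

/-- the weight `w(f) = Σ_e w(e) f(e)` of a fractional matching `f`. -/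
noncomputable def fWeight [Fintype V] [DecidableEq V] (w f : Sym2 V → ℝ) : ℝ :=
  ∑ e : Sym2 V, w e * f e


set_option linter.unusedSectionVars false
set_option maxHeartbeats 1000000

section Aux
variable [Fintype V] [DecidableEq V] (G : SimpleGraph V) (w : Sym2 V → ℝ)


variable [Fintype V] [DecidableEq V] (G : SimpleGraph V) (w : Sym2 V → ℝ)

/-- The set of matching values of coalition S. -/
def mSet (S : Finset V) : Set ℝ :=
  {t | ∃ M : Finset (Sym2 V), IsMatching G M ∧ EdgesIn S M ∧ t = mWeight w M}

lemma matchVal_eq_sSup (S : Finset V) : matchVal G w S = sSup (mSet G w S) := rfl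

lemma mSet_nonempty (S : Finset V) : (mSet G w S).Nonempty :=
  ⟨0, ∅, ⟨by simp, by simp⟩, by intro e he; simp at he, by simp [mWeight]⟩

lemma mSet_finite (S : Finset V) : (mSet G w S).Finite := by
  have : mSet G w S ⊆ (fun M : Finset (Sym2 V) => mWeight w M) ''
      {M | IsMatching G M ∧ EdgesIn S M} := by
    rintro t ⟨M, h1, h2, rfl⟩; exact ⟨M, ⟨h1, h2⟩, rfl⟩
  exact Set.Finite.subset (Set.Finite.image _ (Set.toFinite _)) this

lemma mSet_bddAbove (S : Finset V) : BddAbove (mSet G w S) :=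
  (mSet_finite G w S).bddAbove

lemma le_matchVal {S : Finset V} {M : Finset (Sym2 V)} (h1 : IsMatching G M)
    (h2 : EdgesIn S M) : mWeight w M ≤ matchVal G w S :=
  le_csSup (mSet_bddAbove G w S) ⟨M, h1, h2, rfl⟩

lemma matchVal_le {S : Finset V} {c : ℝ}
    (h : ∀ M : Finset (Sym2 V), IsMatching G M → EdgesIn S M → mWeight w M ≤ c) :
    matchVal G w S ≤ c := by
  refine csSup_le (mSet_nonempty G w S) ?_
  rintro t ⟨M, h1, h2, rfl⟩; exact h M h1 h2

lemma matchVal_nonneg (S : Finset V) : 0 ≤ matchVal G w S := by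
  have h := le_matchVal G w (M := ∅) (S := S) ⟨by simp, by simp⟩
    (by intro e he; simp at he)
  simpa [mWeight] using h

lemma exists_max_matching (S : Finset V) :
    ∃ M : Finset (Sym2 V), IsMatching G M ∧ EdgesIn S M ∧ matchVal G w S = mWeight w M := by
  have h := Set.Nonempty.csSup_mem (mSet_nonempty G w S) (mSet_finite G w S)
  obtain ⟨M, h1, h2, h3⟩ := h
  exact ⟨M, h1, h2, h3⟩

/-- single edge is a matching -/
lemma single_edge_matching {a b : V} (hab : G.Adj a b) :
    IsMatching G {s(a,b)} := by
  constructor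
  · intro e he; simp at he; subst he; simpa using hab
  · intro e he f hf hef; simp at he hf; subst he; subst hf; exact absurd rfl hef

lemma matchVal_pair_ge {a b : V} (hab : G.Adj a b) :
    w s(a,b) ≤ matchVal G w {a, b} := by
  have h := le_matchVal G w (single_edge_matching G hab) (S := {a,b}) ?_
  · simpa [mWeight] using h
  · intro e he v hv
    simp at he; subst he
    rcases Sym2.mem_iff.mp hv with rfl | rfl <;> simp


-- `filter_mem_sym2` and cover lemmas
lemma filter_mem_sym2 (a b : V) :
    Finset.univ.filter (fun v : V => v ∈ s(a,b)) = {a, b} := by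
  ext v; simp [Sym2.mem_iff]

lemma mWeight_le_cover {y : V → ℝ} (hy0 : ∀ v, 0 ≤ y v)
    (hyc : ∀ a b : V, G.Adj a b → w s(a,b) ≤ y a + y b)
    {S : Finset V} {M : Finset (Sym2 V)} (hM : IsMatching G M) (hMS : EdgesIn S M) :
    mWeight w M ≤ ∑ i ∈ S, y i := by
  have step1 : ∀ e ∈ M, w e ≤ ∑ v ∈ Finset.univ.filter (fun v : V => v ∈ e), y v := by
    intro e he
    have hes : e ∈ G.edgeSet := hM.1 e he
    induction e using Sym2.ind with
    | _ a b =>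
      rw [SimpleGraph.mem_edgeSet] at hes
      rw [filter_mem_sym2]
      have hne : a ≠ b := hes.ne
      rw [Finset.sum_insert (by simp [hne]), Finset.sum_singleton]
      exact hyc a b hes
  have hdisj : (M : Set (Sym2 V)).PairwiseDisjoint
      (fun e : Sym2 V => Finset.univ.filter (fun v : V => v ∈ e)) := by
    intro e he f hf hef
    simp only [Function.onFun]
    rw [Finset.disjoint_left]
    intro v hv hv'
    simp only [Finset.mem_filter] at hv hv'
    exact hM.2 e he f hf hef v hv.2 hv'.2
  calc mWeight w M ≤ ∑ e ∈ M, ∑ v ∈ Finset.univ.filter (fun v : V => v ∈ e), y v :=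
        Finset.sum_le_sum step1
    _ = ∑ v ∈ M.biUnion (fun e => Finset.univ.filter (fun v : V => v ∈ e)), y v :=
        (Finset.sum_biUnion hdisj).symm
    _ ≤ ∑ i ∈ S, y i := by
        refine Finset.sum_le_sum_of_subset_of_nonneg ?_ (fun i _ _ => hy0 i)
        intro v hv
        rw [Finset.mem_biUnion] at hv
        obtain ⟨e, he, hv⟩ := hv
        exact hMS e he v (Finset.mem_filter.mp hv).2


variable [Fintype V] [DecidableEq V] (G : SimpleGraph V) (w : Sym2 V → ℝ)

lemma fWeight_le_of_pair_bound {f : Sym2 V → ℝ} (hf : IsFractionalMatching G f)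
    {x : V → ℝ} (hx0 : ∀ v, 0 ≤ x v)
    (hxe : ∀ e ∈ G.edgeSet, w e ≤ ∑ v ∈ Finset.univ.filter (fun v : V => v ∈ e), x v) :
    fWeight w f ≤ ∑ i, x i := by
  have key : ∀ e : Sym2 V,
      w e * f e ≤ f e * ∑ v ∈ Finset.univ.filter (fun v : V => v ∈ e), x v := by
    intro e
    by_cases he : e ∈ G.edgeSet
    · rw [mul_comm]
      exact mul_le_mul_of_nonneg_left (hxe e he) (hf.2.1 e).1
    · rw [hf.1 e he]; simp
  calc fWeight w f ≤ ∑ e : Sym2 V, f e * ∑ v ∈ Finset.univ.filter (fun v : V => v ∈ e), x v :=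
        Finset.sum_le_sum (fun e _ => key e)
    _ = ∑ e : Sym2 V, ∑ v : V, if v ∈ e then f e * x v else 0 := by
        refine Finset.sum_congr rfl (fun e _ => ?_)
        simp [Finset.mul_sum, Finset.sum_filter, mul_ite]
    _ = ∑ v : V, ∑ e : Sym2 V, if v ∈ e then f e * x v else 0 := Finset.sum_comm
    _ = ∑ v : V, (∑ e ∈ Finset.univ.filter (fun e : Sym2 V => v ∈ e), f e) * x v := by
        refine Finset.sum_congr rfl (fun v _ => ?_)
        simp [Finset.sum_filter, Finset.sum_mul, ite_mul]
    _ ≤ ∑ v : V, x v := by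
        refine Finset.sum_le_sum (fun v _ => ?_)
        exact mul_le_of_le_one_left (hx0 v) (hf.2.2 v)

/-- indicator of a matching is a half-matching of the same weight -/
lemma indicator_halfMatching {M : Finset (Sym2 V)} (hM : IsMatching G M) :
    IsHalfMatching G (fun e => if e ∈ M then (1:ℝ) else 0) ∧
      fWeight w (fun e => if e ∈ M then (1:ℝ) else 0) = mWeight w M := by
  refine ⟨⟨⟨?_, ?_, ?_⟩, ?_⟩, ?_⟩
  · intro e he
    simp only [ite_eq_right_iff]
    intro heM; exact absurd (hM.1 e heM) he
  · intro e; by_cases h : e ∈ M <;> simp [h]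
  · intro i
    rw [Finset.sum_ite_mem]
    rw [Finset.sum_const, nsmul_eq_mul, mul_one]
    have hcard : (Finset.univ.filter (fun e : Sym2 V => i ∈ e) ∩ M).card ≤ 1 := by
      refine Finset.card_le_one.mpr ?_
      intro e he f hf
      simp only [Finset.mem_inter, Finset.mem_filter] at he hf
      by_contra hef
      exact hM.2 e he.2 f hf.2 hef i he.1.2 hf.1.2
    exact_mod_cast hcard
  · intro e; by_cases h : e ∈ M <;> simp [h]
  · unfold fWeight mWeight
    simp only [mul_ite, mul_one, mul_zero]
    rw [Finset.sum_ite_mem, Finset.univ_inter]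


variable [Fintype V] [DecidableEq V] (G : SimpleGraph V) (w : Sym2 V → ℝ)

/-- `y` is a fractional vertex cover. -/
def IsCover (y : V → ℝ) : Prop :=
  (∀ v, 0 ≤ y v) ∧ ∀ a b : V, G.Adj a b → w s(a,b) ≤ y a + y b

lemma exists_optimal_cover (hw : ∀ e ∈ G.edgeSet, 0 < w e) :
    ∃ y : V → ℝ, IsCover G w y ∧ ∀ z : V → ℝ, IsCover G w z → (∑ v, y v) ≤ ∑ v, z v := by
  set C : ℝ := ∑ e ∈ G.edgeFinset, w e with hC
  have hC0 : 0 ≤ C :=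
    Finset.sum_nonneg (fun e he => (hw e (SimpleGraph.mem_edgeFinset.mp he)).le)
  have hwC : ∀ a b : V, G.Adj a b → w s(a,b) ≤ C := by
    intro a b hab
    refine Finset.single_le_sum (fun e he => (hw e (SimpleGraph.mem_edgeFinset.mp he)).le) ?_
    exact SimpleGraph.mem_edgeFinset.mpr hab
  set K : Set (V → ℝ) := {y | (∀ v, y v ∈ Set.Icc 0 C) ∧
    ∀ a b : V, G.Adj a b → w s(a,b) ≤ y a + y b} with hK
  have hKne : K.Nonempty := by
    refine ⟨fun _ => C, fun v => ⟨hC0, le_rfl⟩, fun a b hab => ?_⟩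
    have := hwC a b hab; linarith
  have hKclosed : IsClosed K := by
    have h1 : IsClosed {y : V → ℝ | ∀ v, y v ∈ Set.Icc 0 C} := by
      have : {y : V → ℝ | ∀ v, y v ∈ Set.Icc 0 C} =
          ⋂ v, (fun y : V → ℝ => y v) ⁻¹' Set.Icc 0 C := by
        ext y; simp
      rw [this]
      exact isClosed_iInter (fun v => IsClosed.preimage (continuous_apply v) isClosed_Icc)
    have h2 : IsClosed {y : V → ℝ | ∀ a b : V, G.Adj a b → w s(a,b) ≤ y a + y b} := by
      have : {y : V → ℝ | ∀ a b : V, G.Adj a b → w s(a,b) ≤ y a + y b} =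
          ⋂ a, ⋂ b, ⋂ (_ : G.Adj a b), {y : V → ℝ | w s(a,b) ≤ y a + y b} := by
        ext y; simp
      rw [this]
      refine isClosed_iInter (fun a => isClosed_iInter (fun b => isClosed_iInter (fun hab => ?_)))
      exact isClosed_le continuous_const ((continuous_apply a).add (continuous_apply b))
    have : K = {y : V → ℝ | ∀ v, y v ∈ Set.Icc 0 C} ∩
        {y : V → ℝ | ∀ a b : V, G.Adj a b → w s(a,b) ≤ y a + y b} := rfl
    rw [this]; exact IsClosed.inter h1 h2
  have hKcompact : IsCompact K := by
    refine IsCompact.of_isClosed_subset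
      (isCompact_univ_pi (fun v : V => isCompact_Icc (a := (0:ℝ)) (b := C))) hKclosed ?_
    intro y hy
    rw [Set.mem_univ_pi]
    exact fun v => hy.1 v
  have hcont : Continuous (fun y : V → ℝ => ∑ v, y v) :=
    continuous_finset_sum _ (fun i _ => continuous_apply i)
  obtain ⟨y, hyK, hymin⟩ := hKcompact.exists_isMinOn hKne hcont.continuousOn
  refine ⟨y, ⟨fun v => (hyK.1 v).1, hyK.2⟩, ?_⟩
  intro z hz
  set z' : V → ℝ := fun v => min (z v) C with hz'
  have hz'K : z' ∈ K := by
    constructor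
    · intro v; exact ⟨le_min (hz.1 v) hC0, min_le_right _ _⟩
    · intro a b hab
      rcases le_or_gt (z a) C with ha | ha
      · rcases le_or_gt (z b) C with hb | hb
        · simp only [hz', min_eq_left ha, min_eq_left hb]
          exact hz.2 a b hab
        · have h1 : w s(a,b) ≤ C := hwC a b hab
          have h2 : (0:ℝ) ≤ min (z a) C := le_min (hz.1 a) hC0
          simp only [hz', min_eq_right hb.le]
          linarith
      · have h1 : w s(a,b) ≤ C := hwC a b hab
        have h2 : (0:ℝ) ≤ min (z b) C := le_min (hz.1 b) hC0
        simp only [hz', min_eq_right ha.le]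
        linarith
  have h1 : (∑ v, y v) ≤ ∑ v, z' v := hymin hz'K
  have h2 : (∑ v, z' v) ≤ ∑ v, z v :=
    Finset.sum_le_sum (fun v _ => min_le_left _ _)
  linarith


end Aux

/-- CSB-style Mendelsohn–Dulmage: from an injection `σ` defined (usefully) on `P`,
produce a "partial injection" `M` of pairs, each of the form `(a, σ a)` or `(σ b, b)`
with `a, b ∈ P`, whose first coordinates are distinct, whose second coordinates are
distinct, and which covers `P` on both coordinates. -/
lemma exists_doubleMatching [DecidableEq V] {σ : V → V} (hinj : Function.Injective σ)
    (P : Finset V) :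
    ∃ M : Finset (V × V),
      (∀ p ∈ M, (p.1 ∈ P ∧ p.2 = σ p.1) ∨ (p.2 ∈ P ∧ p.1 = σ p.2)) ∧
      (∀ p ∈ M, ∀ q ∈ M, p.1 = q.1 → p = q) ∧
      (∀ p ∈ M, ∀ q ∈ M, p.2 = q.2 → p = q) ∧
      (∀ a ∈ P, ∃ p ∈ M, p.1 = a) ∧ (∀ b ∈ P, ∃ p ∈ M, p.2 = b) := by
  classical
  set Φ : Set V →o Set V :=
    ⟨fun X => (σ '' (↑P \ σ '' ↑P)) ∪ σ '' ((σ '' (X ∩ ↑P)) ∩ ↑P), by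
      intro X Y hXY
      apply Set.union_subset_union_right
      exact Set.image_mono (Set.inter_subset_inter_left _
        (Set.image_mono (Set.inter_subset_inter_left _ hXY)))⟩ with hΦdef
  set D : Set V := OrderHom.lfp Φ with hDdef
  have hD : (σ '' (↑P \ σ '' ↑P)) ∪ σ '' ((σ '' (D ∩ ↑P)) ∩ ↑P) = D := OrderHom.map_lfp Φ
  -- membership unfolding
  have hDmem : ∀ x, x ∈ D ↔
      (∃ p, (p ∈ P ∧ p ∉ σ '' ↑P) ∧ σ p = x) ∨
      (∃ p, ((∃ d, (d ∈ D ∧ d ∈ P) ∧ σ d = p) ∧ p ∈ P) ∧ σ p = x) := by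
    intro x
    conv_lhs => rw [← hD]
    simp [Set.mem_union, Set.mem_image, Set.mem_diff, Set.mem_inter_iff]
  set M : Finset (V × V) :=
    ((P.filter (fun b => σ b ∈ D)).image (fun b => (σ b, b))) ∪
      ((P.filter (fun a => a ∉ D)).image (fun a => (a, σ a))) with hM
  -- characterize membership in M
  have hMmem : ∀ p : V × V, p ∈ M ↔
      (p.2 ∈ P ∧ σ p.2 ∈ D ∧ p.1 = σ p.2) ∨ (p.1 ∈ P ∧ p.1 ∉ D ∧ p.2 = σ p.1) := by
    intro p
    simp only [hM, Finset.mem_union, Finset.mem_image, Finset.mem_filter]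
    constructor
    · rintro (⟨b, ⟨hbP, hbD⟩, rfl⟩ | ⟨a, ⟨haP, haD⟩, rfl⟩)
      · exact Or.inl ⟨hbP, hbD, rfl⟩
      · exact Or.inr ⟨haP, haD, rfl⟩
    · rintro (⟨h1, h2, h3⟩ | ⟨h1, h2, h3⟩)
      · exact Or.inl ⟨p.2, ⟨h1, h2⟩, by rw [← h3]⟩
      · exact Or.inr ⟨p.1, ⟨h1, h2⟩, by rw [← h3]⟩
  refine ⟨M, ?_, ?_, ?_, ?_, ?_⟩
  · -- form
    intro p hp
    rcases (hMmem p).mp hp with ⟨h1, _, h3⟩ | ⟨h1, _, h3⟩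
    · exact Or.inr ⟨h1, h3⟩
    · exact Or.inl ⟨h1, h3⟩
  · -- injective firsts
    intro p hp q hq h1
    rcases (hMmem p).mp hp with ⟨hp1, hp2, hp3⟩ | ⟨hp1, hp2, hp3⟩ <;>
      rcases (hMmem q).mp hq with ⟨hq1, hq2, hq3⟩ | ⟨hq1, hq2, hq3⟩
    · -- both τ-type : σ p.2 = σ q.2
      have : p.2 = q.2 := hinj (by rw [← hp3, ← hq3, h1])
      exact Prod.ext h1 this
    · -- p τ-type, q σ-type: p.1 = σ p.2 ∈ D, q.1 ∉ D, p.1 = q.1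
      exact absurd (h1 ▸ hp3 ▸ hp2) hq2
    · exact absurd ((h1.symm ▸ hq3) ▸ hq2) hp2
    · exact Prod.ext h1 (by rw [hp3, hq3, h1])
  · -- injective seconds
    intro p hp q hq h2
    rcases (hMmem p).mp hp with ⟨hp1, hp2, hp3⟩ | ⟨hp1, hp2, hp3⟩ <;>
      rcases (hMmem q).mp hq with ⟨hq1, hq2, hq3⟩ | ⟨hq1, hq2, hq3⟩
    · exact Prod.ext (by rw [hp3, hq3, h2]) h2
    · -- p τ-type (p.2 = b, σ b ∈ D), q σ-type (q.2 = σ q.1, q.1 ∈ P \ D), b = σ q.1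
      exfalso
      have hb : p.2 = σ q.1 := h2.trans hq3
      rcases (hDmem (σ p.2)).mp hp2 with ⟨r, ⟨hrP, hrn⟩, hr⟩ | ⟨r, ⟨⟨d, ⟨hdD, hdP⟩, hdr⟩, hrP⟩, hr⟩
      · -- σ p.2 = σ r, r ∉ σ '' P ⇒ p.2 = r, but p.2 = σ q.1 ∈ σ '' P
        have : p.2 = r := hinj hr.symm
        exact hrn ⟨q.1, hq1, (this ▸ hb).symm⟩
      · -- σ p.2 = σ r, r = σ d, d ∈ D ∩ P; p.2 = r = σ d ⇒ q.1 = d ∈ D, contra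
        have hpr : p.2 = r := hinj hr.symm
        have : q.1 = d := hinj (by rw [← hb, hpr, ← hdr])
        exact hq2 (this ▸ hdD)
    · exfalso
      have hb : q.2 = σ p.1 := h2.symm.trans hp3
      rcases (hDmem (σ q.2)).mp hq2 with ⟨r, ⟨hrP, hrn⟩, hr⟩ | ⟨r, ⟨⟨d, ⟨hdD, hdP⟩, hdr⟩, hrP⟩, hr⟩
      · have : q.2 = r := hinj hr.symm
        exact hrn ⟨p.1, hp1, (this ▸ hb).symm⟩
      · have hpr : q.2 = r := hinj hr.symm
        have : p.1 = d := hinj (by rw [← hb, hpr, ← hdr])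
        exact hp2 (this ▸ hdD)
    · exact Prod.ext (hinj (by rw [← hp3, ← hq3, h2])) h2
  · -- P covered by firsts
    intro a haP
    by_cases haD : a ∈ D
    · rcases (hDmem a).mp haD with ⟨r, ⟨hrP, hrn⟩, hr⟩ | ⟨r, ⟨⟨d, ⟨hdD, hdP⟩, hdr⟩, hrP⟩, hr⟩
      · exact ⟨(σ r, r), (hMmem _).mpr (Or.inl ⟨hrP, hr.symm ▸ haD, rfl⟩), hr⟩
      · exact ⟨(σ r, r), (hMmem _).mpr (Or.inl ⟨hrP, hr.symm ▸ haD, rfl⟩), hr⟩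
    · exact ⟨(a, σ a), (hMmem _).mpr (Or.inr ⟨haP, haD, rfl⟩), rfl⟩
  · -- P covered by seconds
    intro b hbP
    by_cases hbD : σ b ∈ D
    · exact ⟨(σ b, b), (hMmem _).mpr (Or.inl ⟨hbP, hbD, rfl⟩), rfl⟩
    · -- b ∈ σ '' P
      have hbim : ∃ a, a ∈ P ∧ σ a = b := by
        by_contra hno
        push_neg at hno
        have : σ b ∈ D := by
          rw [← hD]
          exact Or.inl ⟨b, ⟨hbP, fun ⟨a, haP, ha⟩ => hno a haP ha⟩, rfl⟩
        exact hbD this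
      obtain ⟨a, haP, ha⟩ := hbim
      have haD : a ∉ D := by
        intro haD
        have : σ b ∈ D := by
          rw [← hD]
          refine Or.inr ⟨b, ⟨⟨a, ⟨haD, haP⟩, ha⟩, hbP⟩, rfl⟩
        exact hbD this
      exact ⟨(a, σ a), (hMmem _).mpr (Or.inr ⟨haP, haD, rfl⟩), ha⟩


section Main
variable [Fintype V] [DecidableEq V] (G : SimpleGraph V) (w : Sym2 V → ℝ)

variable [Fintype V] [DecidableEq V] (G : SimpleGraph V) (w : Sym2 V → ℝ) (y : V → ℝ)

/-- tight-neighbourhood of a set -/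
noncomputable def NT (S : Finset V) : Finset V :=
  Finset.univ.filter (fun v => ∃ u ∈ S, G.Adj u v ∧ y u + y v = w s(u,v))

lemma hall_condition (hy : IsCover G w y)
    (hopt : ∀ z : V → ℝ, IsCover G w z → (∑ v, y v) ≤ ∑ v, z v)
    {S : Finset V} (hS : ∀ v ∈ S, 0 < y v) : S.card ≤ (NT G w y S).card := by
  by_contra hlt
  push_neg at hlt
  have hSne : S.Nonempty := by
    rw [← Finset.card_pos]
    omega
  set Q : Finset (V × V) := (Finset.univ ×ˢ Finset.univ).filter
    (fun p => G.Adj p.1 p.2 ∧ y p.1 + y p.2 ≠ w s(p.1,p.2)) with hQ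
  set F : Finset ℝ := S.image y ∪ Q.image (fun p => y p.1 + y p.2 - w s(p.1,p.2)) with hF
  have hFne : F.Nonempty := Finset.Nonempty.inl (hSne.image y)
  set ε : ℝ := F.min' hFne with hε
  have hεpos : 0 < ε := by
    rw [hε]
    rw [Finset.lt_min'_iff]
    intro t ht
    rw [hF, Finset.mem_union] at ht
    rcases ht with ht | ht
    · obtain ⟨v, hv, rfl⟩ := Finset.mem_image.mp ht
      exact hS v hv
    · obtain ⟨p, hp, rfl⟩ := Finset.mem_image.mp ht
      obtain ⟨_, hadj, hne⟩ := Finset.mem_filter.mp hp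
      have := hy.2 p.1 p.2 hadj
      rcases lt_or_eq_of_le this with h | h
      · linarith
      · exact absurd h.symm hne
  have hεS : ∀ v ∈ S, ε ≤ y v := by
    intro v hv
    exact Finset.min'_le _ _ (Finset.mem_union_left _ (Finset.mem_image_of_mem y hv))
  have hεslack : ∀ a b : V, G.Adj a b → y a + y b ≠ w s(a,b) → ε ≤ y a + y b - w s(a,b) := by
    intro a b hadj hne
    refine Finset.min'_le _ _ (Finset.mem_union_right _ ?_)
    have hQm : (a,b) ∈ Q := by
      rw [hQ]
      exact Finset.mem_filter.mpr
        ⟨Finset.mem_product.mpr ⟨Finset.mem_univ _, Finset.mem_univ _⟩, hadj, hne⟩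
    exact Finset.mem_image_of_mem _ hQm
  set z : V → ℝ := fun v => y v +
    (ε/2) * ((if v ∈ NT G w y S then (1:ℝ) else 0) - (if v ∈ S then (1:ℝ) else 0)) with hz
  have hind : ∀ (v : V) (A : Finset V), (0:ℝ) ≤ (if v ∈ A then (1:ℝ) else 0) ∧
      (if v ∈ A then (1:ℝ) else 0) ≤ 1 := by
    intro v A; split <;> norm_num
  have hzcover : IsCover G w z := by
    constructor
    · intro v
      by_cases hvS : v ∈ S
      · have h1 := hεS v hvS
        have h2 := (hind v (NT G w y S)).1
        simp only [hz, hvS, if_true]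
        nlinarith
      · have h2 := (hind v (NT G w y S)).1
        have h0 := hy.1 v
        simp only [hz, hvS, if_false]
        nlinarith
    · intro a b hadj
      by_cases ht : y a + y b = w s(a,b)
      · -- tight edge
        have hNb : a ∈ S → b ∈ NT G w y S := by
          intro haS
          exact Finset.mem_filter.mpr ⟨Finset.mem_univ _, a, haS, hadj, ht⟩
        have hNa : b ∈ S → a ∈ NT G w y S := by
          intro hbS
          refine Finset.mem_filter.mpr ⟨Finset.mem_univ _, b, hbS, hadj.symm, ?_⟩
          rw [Sym2.eq_swap]
          linarith
        by_cases haS : a ∈ S <;> by_cases hbS : b ∈ S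
        · simp only [hz, haS, hbS, hNb haS, hNa hbS, if_true]
          linarith
        · have h1 := (hind a (NT G w y S)).1
          simp only [hz, haS, hbS, hNb haS, if_true, if_false]
          nlinarith
        · have h1 := (hind b (NT G w y S)).1
          simp only [hz, haS, hbS, hNa hbS, if_true, if_false]
          nlinarith
        · have h1 := (hind a (NT G w y S)).1
          have h2 := (hind b (NT G w y S)).1
          simp only [hz, haS, hbS, if_false]
          nlinarith
      · -- slack edge
        have hsl := hεslack a b hadj ht
        have h1 := (hind a (NT G w y S)).1
        have h2 := (hind b (NT G w y S)).1
        have h3 := (hind a S).2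
        have h4 := (hind b S).2
        simp only [hz]
        nlinarith
  have hsum : (∑ v, z v) < ∑ v, y v := by
    have h1 : (∑ v, z v) = (∑ v, y v) +
        (ε/2) * (((NT G w y S).card : ℝ) - (S.card : ℝ)) := by
      simp only [hz]
      rw [Finset.sum_add_distrib, ← Finset.mul_sum]
      congr 1
      rw [Finset.sum_sub_distrib]
      congr 2
      · rw [Finset.sum_boole]
        congr 1
        simp [Finset.filter_mem_eq_inter]
      · rw [Finset.sum_boole]
        congr 1
        simp [Finset.filter_mem_eq_inter]
    rw [h1]
    have : ((NT G w y S).card : ℝ) - (S.card : ℝ) < 0 := by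
      have : ((NT G w y S).card : ℝ) < (S.card : ℝ) := by exact_mod_cast hlt
      linarith
    nlinarith
  exact absurd (hopt z hzcover) (by linarith)

lemma exists_tight_injection (hy : IsCover G w y)
    (hopt : ∀ z : V → ℝ, IsCover G w z → (∑ v, y v) ≤ ∑ v, z v) :
    ∃ σ : V → V, Function.Injective σ ∧
      ∀ v, 0 < y v → G.Adj v (σ v) ∧ y v + y (σ v) = w s(v, σ v) := by
  set t : V → Finset V := fun v => if 0 < y v then NT G w y {v} else Finset.univ with hT
  have hHall : ∀ s : Finset V, s.card ≤ (s.biUnion t).card := by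
    intro s
    by_cases hsub : ∀ v ∈ s, 0 < y v
    · have heq : s.biUnion t = NT G w y s := by
        ext x
        simp only [Finset.mem_biUnion, hT, NT, Finset.mem_filter, Finset.mem_univ, true_and]
        constructor
        · rintro ⟨v, hv, hx⟩
          rw [if_pos (hsub v hv)] at hx
          simp only [NT, Finset.mem_filter, Finset.mem_univ, true_and, Finset.mem_singleton] at hx
          obtain ⟨u, rfl, h⟩ := hx
          exact ⟨u, hv, h⟩
        · rintro ⟨u, hu, h⟩
          refine ⟨u, hu, ?_⟩
          rw [if_pos (hsub u hu)]
          simp only [NT, Finset.mem_filter, Finset.mem_univ, true_and, Finset.mem_singleton]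
          exact ⟨u, rfl, h⟩
      rw [heq]
      exact hall_condition G w y hy hopt hsub
    · push_neg at hsub
      obtain ⟨v₀, hv₀s, hv₀⟩ := hsub
      have : (Finset.univ : Finset V) ⊆ s.biUnion t := by
        intro x _
        refine Finset.mem_biUnion.mpr ⟨v₀, hv₀s, ?_⟩
        rw [hT]
        simp only [not_lt.mpr hv₀, if_neg, if_false]
        exact Finset.mem_univ x
      calc s.card ≤ (Finset.univ : Finset V).card := Finset.card_le_univ s
        _ ≤ (s.biUnion t).card := Finset.card_le_card this
  obtain ⟨σ, hσinj, hσmem⟩ := (Finset.all_card_le_biUnion_card_iff_exists_injective t).mp hHall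
  refine ⟨σ, hσinj, ?_⟩
  intro v hv
  have := hσmem v
  rw [hT] at this
  simp only [if_pos hv] at this
  simp only [NT, Finset.mem_filter, Finset.mem_univ, true_and, Finset.mem_singleton] at this
  obtain ⟨u, rfl, h⟩ := this
  exact h


variable [Fintype V] [DecidableEq V] (G : SimpleGraph V) (w : Sym2 V → ℝ)

lemma halfMatching_of_doubleMatching (M : Finset (V × V))
    (hadj : ∀ p ∈ M, G.Adj p.1 p.2)
    (hfst : ∀ p ∈ M, ∀ q ∈ M, p.1 = q.1 → p = q)
    (hsnd : ∀ p ∈ M, ∀ q ∈ M, p.2 = q.2 → p = q) :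
    ∃ f : Sym2 V → ℝ, IsHalfMatching G f ∧
      fWeight w f = (1/2) * ∑ p ∈ M, w s(p.1, p.2) := by
  set f : Sym2 V → ℝ :=
    fun e => ((M.filter (fun p => s(p.1, p.2) = e)).card : ℝ) / 2 with hf
  have hcard2 : ∀ e : Sym2 V, (M.filter (fun p => s(p.1, p.2) = e)).card ≤ 2 := by
    intro e
    induction e using Sym2.ind with
    | _ a b =>
      have hsub : M.filter (fun p => s(p.1, p.2) = s(a,b)) ⊆ {(a,b), (b,a)} := by
        intro p hp
        have := (Finset.mem_filter.mp hp).2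
        rw [Sym2.eq_iff] at this
        rcases this with ⟨h1, h2⟩ | ⟨h1, h2⟩
        · exact Finset.mem_insert.mpr (Or.inl (Prod.ext h1 h2))
        · exact Finset.mem_insert.mpr (Or.inr (Finset.mem_singleton.mpr (Prod.ext h1 h2)))
      calc (M.filter (fun p => s(p.1, p.2) = s(a,b))).card ≤ ({(a,b), (b,a)} : Finset (V × V)).card :=
            Finset.card_le_card hsub
        _ ≤ 2 := Finset.card_insert_le _ _ |>.trans (by simp)
  have hcardv : ∀ i : V, (M.filter (fun p => i ∈ s(p.1, p.2))).card ≤ 2 := by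
    intro i
    have hsub : M.filter (fun p => i ∈ s(p.1, p.2)) ⊆
        M.filter (fun p => p.1 = i) ∪ M.filter (fun p => p.2 = i) := by
      intro p hp
      obtain ⟨hpM, hpi⟩ := Finset.mem_filter.mp hp
      rw [Sym2.mem_iff] at hpi
      rcases hpi with h | h
      · exact Finset.mem_union_left _ (Finset.mem_filter.mpr ⟨hpM, h.symm⟩)
      · exact Finset.mem_union_right _ (Finset.mem_filter.mpr ⟨hpM, h.symm⟩)
    have h1 : (M.filter (fun p => p.1 = i)).card ≤ 1 := by
      refine Finset.card_le_one.mpr ?_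
      intro p hp q hq
      obtain ⟨hpM, hpi⟩ := Finset.mem_filter.mp hp
      obtain ⟨hqM, hqi⟩ := Finset.mem_filter.mp hq
      exact hfst p hpM q hqM (hpi.trans hqi.symm)
    have h2 : (M.filter (fun p => p.2 = i)).card ≤ 1 := by
      refine Finset.card_le_one.mpr ?_
      intro p hp q hq
      obtain ⟨hpM, hpi⟩ := Finset.mem_filter.mp hp
      obtain ⟨hqM, hqi⟩ := Finset.mem_filter.mp hq
      exact hsnd p hpM q hqM (hpi.trans hqi.symm)
    calc (M.filter (fun p => i ∈ s(p.1, p.2))).card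
        ≤ (M.filter (fun p => p.1 = i) ∪ M.filter (fun p => p.2 = i)).card :=
          Finset.card_le_card hsub
      _ ≤ _ := Finset.card_union_le _ _
      _ ≤ 2 := by omega
  refine ⟨f, ⟨⟨?_, ?_, ?_⟩, ?_⟩, ?_⟩
  · -- support
    intro e he
    have : M.filter (fun p => s(p.1, p.2) = e) = ∅ := by
      refine Finset.filter_eq_empty_iff.mpr ?_
      intro p hp hpe
      exact he (hpe ▸ ((SimpleGraph.mem_edgeSet G).mpr (hadj p hp)))
    simp [hf, this]
  · -- bounds
    intro e
    have h2 := hcard2 e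
    constructor
    · positivity
    · rw [hf]
      have : ((M.filter (fun p => s(p.1, p.2) = e)).card : ℝ) ≤ 2 := by exact_mod_cast h2
      linarith
  · -- vertex constraint
    intro i
    have key : (∑ e ∈ Finset.univ.filter (fun e : Sym2 V => i ∈ e),
        ((M.filter (fun p => s(p.1, p.2) = e)).card : ℝ))
        = ((M.filter (fun p => i ∈ s(p.1, p.2))).card : ℝ) := by
      rw_mod_cast [Finset.card_eq_sum_card_fiberwise
        (f := fun p : V × V => s(p.1, p.2))
        (t := Finset.univ.filter (fun e : Sym2 V => i ∈ e))
        (fun p hp => by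
          simp only [Finset.mem_coe, Finset.mem_filter] at hp ⊢
          exact ⟨Finset.mem_univ _, hp.2⟩)]
      refine Finset.sum_congr rfl ?_
      intro e he
      congr 1
      rw [Finset.filter_filter]
      refine Finset.filter_congr ?_
      intro p _
      simp only [Finset.mem_filter] at he
      constructor
      · intro h; exact ⟨by rw [h]; exact he.2, h⟩
      · intro h; exact h.2
    have h2 : ((M.filter (fun p => i ∈ s(p.1, p.2))).card : ℝ) ≤ 2 := by
      exact_mod_cast hcardv i
    simp only [hf]
    rw [← Finset.sum_div]
    rw [key]
    linarith
  · -- half values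
    intro e
    have h2 := hcard2 e
    simp only [hf]
    set n := (M.filter (fun p => s(p.1, p.2) = e)).card with hn
    interval_cases n <;> norm_num
  · -- weight
    have step : (∑ p ∈ M, w s(p.1, p.2)) =
        ∑ e : Sym2 V, ((M.filter (fun p => s(p.1, p.2) = e)).card : ℝ) * w e := by
      rw [← Finset.sum_fiberwise (s := M) (g := fun p : V × V => s(p.1, p.2))
        (f := fun p => w s(p.1, p.2))]
      refine Finset.sum_congr rfl ?_
      intro e _
      rw [Finset.sum_congr rfl (fun p hp => by
        rw [(Finset.mem_filter.mp hp).2])]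
      rw [Finset.sum_const, nsmul_eq_mul]
    rw [fWeight, step, Finset.mul_sum]
    refine Finset.sum_congr rfl ?_
    intro e _
    simp only [hf]
    ring


/-- The set of half-matching weights. -/
def hSet : Set ℝ := {t | ∃ f : Sym2 V → ℝ, IsHalfMatching G f ∧ t = fWeight w f}

lemma hSet_zero_mem : (0:ℝ) ∈ hSet G w := by
  refine ⟨fun _ => 0, ⟨⟨fun e _ => rfl, fun e => by norm_num, fun i => by simp⟩,
    fun e => Or.inl rfl⟩, ?_⟩
  simp [fWeight]

lemma hSet_bddAbove (hw : ∀ e ∈ G.edgeSet, 0 < w e) : BddAbove (hSet G w) := by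
  refine ⟨∑ e ∈ G.edgeFinset, w e, ?_⟩
  rintro t ⟨f, hf, rfl⟩
  have step : ∀ e : Sym2 V, w e * f e ≤ if e ∈ G.edgeFinset then w e else 0 := by
    intro e
    by_cases he : e ∈ G.edgeSet
    · rw [if_pos (SimpleGraph.mem_edgeFinset.mpr he)]
      have h0 := (hw e he).le
      have h1 := (hf.1.2.1 e).2
      nlinarith
    · rw [if_neg (fun h => he (SimpleGraph.mem_edgeFinset.mp h)), hf.1.1 e he, mul_zero]
  calc fWeight w f ≤ ∑ e : Sym2 V, (if e ∈ G.edgeFinset then w e else 0) :=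
        Finset.sum_le_sum (fun e _ => step e)
    _ = ∑ e ∈ G.edgeFinset, w e := by
        rw [Finset.sum_ite_mem, Finset.univ_inter]

end Main

/-- the core of the matching game on `(G,w)` is non-empty if and only if
the maximum weight of a matching of `G` equals the maximum weight of a half-matching
of `G`. -/
theorem statement3 [Fintype V] [DecidableEq V] (G : SimpleGraph V) (w : Sym2 V → ℝ)
    (hw : ∀ e ∈ G.edgeSet, 0 < w e) :
    (∃ x : V → ℝ, InCore (matchVal G w) x) ↔
      matchVal G w Finset.univ =
        sSup {t | ∃ f : Sym2 V → ℝ, IsHalfMatching G f ∧ t = fWeight w f} := by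
  have hset_eq : {t | ∃ f : Sym2 V → ℝ, IsHalfMatching G f ∧ t = fWeight w f} = hSet G w := rfl
  rw [hset_eq]
  constructor
  · -- core nonempty → equality
    rintro ⟨x, hx⟩
    have hx0 : ∀ v, 0 ≤ x v := by
      intro v
      have h1 := matchVal_nonneg G w {v}
      have h2 := hx.2 {v}
      simp only [Finset.sum_singleton] at h2
      linarith
    have hxe : ∀ e ∈ G.edgeSet,
        w e ≤ ∑ v ∈ Finset.univ.filter (fun v : V => v ∈ e), x v := by
      intro e he
      induction e using Sym2.ind with
      | _ a b =>
        rw [SimpleGraph.mem_edgeSet] at he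
        rw [filter_mem_sym2]
        have h1 := matchVal_pair_ge G w he
        have h2 := hx.2 {a, b}
        linarith
    have bnd : ∀ t ∈ hSet G w, t ≤ ∑ i, x i := by
      rintro t ⟨f, hf, rfl⟩
      exact fWeight_le_of_pair_bound G w hf.1 hx0 hxe
    refine le_antisymm ?_ ?_
    · obtain ⟨M, hM1, hM2, hMval⟩ := exists_max_matching G w Finset.univ
      obtain ⟨hhalf, hwt⟩ := indicator_halfMatching G w hM1
      rw [hMval]
      exact le_csSup ⟨∑ i, x i, bnd⟩ ⟨_, hhalf, hwt.symm⟩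
    · refine csSup_le ⟨0, hSet_zero_mem G w⟩ ?_
      intro t ht
      calc t ≤ ∑ i, x i := bnd t ht
        _ = matchVal G w Finset.univ := hx.1
  · -- equality → core nonempty
    intro heq
    obtain ⟨y, hy, hopt⟩ := exists_optimal_cover G w hw
    obtain ⟨σ, hσinj, hσ⟩ := exists_tight_injection G w y hy hopt
    set P : Finset V := Finset.univ.filter (fun v => 0 < y v) with hP
    obtain ⟨M, hform, hfst, hsnd, hcovfst, hcovsnd⟩ := exists_doubleMatching hσinj P
    have hPmem : ∀ v ∈ P, 0 < y v := fun v hv => (Finset.mem_filter.mp hv).2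
    have hadj : ∀ p ∈ M, G.Adj p.1 p.2 := by
      intro p hp
      rcases hform p hp with ⟨h1, h2⟩ | ⟨h1, h2⟩
      · rw [h2]; exact (hσ p.1 (hPmem _ h1)).1
      · rw [h2]; exact ((hσ p.2 (hPmem _ h1)).1).symm
    have htight : ∀ p ∈ M, y p.1 + y p.2 = w s(p.1, p.2) := by
      intro p hp
      rcases hform p hp with ⟨h1, h2⟩ | ⟨h1, h2⟩
      · rw [h2]; exact (hσ p.1 (hPmem _ h1)).2
      · rw [h2, Sym2.eq_swap]
        have := (hσ p.2 (hPmem _ h1)).2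
        linarith
    -- sum bound
    have hyP : ∑ v ∈ P, y v = ∑ v, y v := by
      refine Finset.sum_subset (Finset.subset_univ P) ?_
      intro v _ hv
      rw [hP] at hv
      simp only [Finset.mem_filter, Finset.mem_univ, true_and, not_lt] at hv
      linarith [hy.1 v]
    have hfstsum : (∑ v, y v) ≤ ∑ p ∈ M, y p.1 := by
      rw [← hyP]
      have himg : P ⊆ M.image Prod.fst := by
        intro a ha
        obtain ⟨p, hpM, hpa⟩ := hcovfst a ha
        exact Finset.mem_image.mpr ⟨p, hpM, hpa⟩
      calc (∑ v ∈ P, y v) ≤ ∑ v ∈ M.image Prod.fst, y v :=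
            Finset.sum_le_sum_of_subset_of_nonneg himg (fun v _ _ => hy.1 v)
        _ = ∑ p ∈ M, y p.1 := Finset.sum_image (fun p hp q hq h => hfst p hp q hq h)
    have hsndsum : (∑ v, y v) ≤ ∑ p ∈ M, y p.2 := by
      rw [← hyP]
      have himg : P ⊆ M.image Prod.snd := by
        intro b hb
        obtain ⟨p, hpM, hpb⟩ := hcovsnd b hb
        exact Finset.mem_image.mpr ⟨p, hpM, hpb⟩
      calc (∑ v ∈ P, y v) ≤ ∑ v ∈ M.image Prod.snd, y v :=
            Finset.sum_le_sum_of_subset_of_nonneg himg (fun v _ _ => hy.1 v)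
        _ = ∑ p ∈ M, y p.2 := Finset.sum_image (fun p hp q hq h => hsnd p hp q hq h)
    have hMsum : 2 * (∑ v, y v) ≤ ∑ p ∈ M, w s(p.1, p.2) := by
      have : (∑ p ∈ M, w s(p.1, p.2)) = (∑ p ∈ M, y p.1) + ∑ p ∈ M, y p.2 := by
        rw [← Finset.sum_add_distrib]
        exact (Finset.sum_congr rfl (fun p hp => (htight p hp))).symm
      linarith
    obtain ⟨f, hfhalf, hfwt⟩ := halfMatching_of_doubleMatching G w M hadj hfst hsnd
    have hfge : (∑ v, y v) ≤ fWeight w f := by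
      rw [hfwt]; linarith
    have hle : fWeight w f ≤ matchVal G w Finset.univ := by
      rw [heq]
      exact le_csSup (hSet_bddAbove G w hw) ⟨f, hfhalf, rfl⟩
    have hge : matchVal G w Finset.univ ≤ ∑ v, y v :=
      matchVal_le G w (fun M hM hMS => mWeight_le_cover G w hy.1 hy.2 hM hMS)
    refine ⟨y, ?_, ?_⟩
    · linarith
    · intro S
      exact matchVal_le G w (fun M hM hMS => mWeight_le_cover G w hy.1 hy.2 hM hMS)

end MatchingGames
end

section
/- Let G=(V,E) be a finite simple graph with positive edge weights w. A solution (M,p) for the instance (G,w) of Stable Roommates with Payments is stable if and only if M is a maximum weight matching of G and the total pay-off vector p^t is a core allocation of the matching game defined on (G,w). -/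
open scoped Classical
open Finset

namespace MatchingGames

variable {V : Type*}

/-- `(M,p)` is a solution for the instance `(G,w)`: `M` is a matching of `G`, matched
pairs split the weight of their edge into two nonnegative pay-offs, and all other
pay-offs are zero. -/
def IsSolution (G : SimpleGraph V) (w : Sym2 V → ℝ) (M : Finset (Sym2 V))
    (p : V → V → ℝ) : Prop :=
  IsMatching G M ∧
    (∀ i j : V, s(i, j) ∈ M → 0 ≤ p i j ∧ 0 ≤ p j i ∧ p i j + p j i = w s(i, j)) ∧
    ∀ i j : V, s(i, j) ∉ M → p i j = 0

/-- the total pay-off vector `p^t`. -/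
noncomputable def totalPayoff [Fintype V] (p : V → V → ℝ) (i : V) : ℝ := ∑ j, p i j

/-- a solution `(M,p)` is stable if no pair `{i,j}` with `ij ∈ E \ M` satisfies
`p^t(i) + p^t(j) < w(ij)`. -/
def IsStable [Fintype V] (G : SimpleGraph V) (w : Sym2 V → ℝ) (M : Finset (Sym2 V))
    (p : V → V → ℝ) : Prop :=
  IsSolution G w M p ∧
    ∀ i j : V, G.Adj i j → s(i, j) ∉ M →
      w s(i, j) ≤ totalPayoff p i + totalPayoff p j

section Aux

variable [Fintype V] {G : SimpleGraph V} {w : Sym2 V → ℝ} {M : Finset (Sym2 V)}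
  {p : V → V → ℝ}

lemma payoff_nonneg (hsol : IsSolution G w M p) (i j : V) : 0 ≤ p i j := by
  by_cases h : s(i, j) ∈ M
  · exact (hsol.2.1 i j h).1
  · rw [hsol.2.2 i j h]

lemma totalPayoff_nonneg (hsol : IsSolution G w M p) (i : V) : 0 ≤ totalPayoff p i :=
  Finset.sum_nonneg fun j _ => payoff_nonneg hsol i j

lemma payoff_le_total (hsol : IsSolution G w M p) (i j : V) : p i j ≤ totalPayoff p i :=
  Finset.single_le_sum (fun k _ => payoff_nonneg hsol i k) (mem_univ j)

lemma sum_totalPayoff (hsol : IsSolution G w M p) :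
    (∑ i, totalPayoff p i) = mWeight w M := by
  classical
  set P : Finset (V × V) :=
    (Finset.univ ×ˢ Finset.univ).filter (fun q : V × V => s(q.1, q.2) ∈ M) with hP
  have h1 : (∑ i, totalPayoff p i) = ∑ q ∈ P, p q.1 q.2 := by
    simp only [totalPayoff]
    rw [← Finset.sum_product']
    refine (Finset.sum_subset (Finset.filter_subset _ _) ?_).symm
    intro q _ hq
    rw [Finset.mem_filter] at hq
    push_neg at hq
    exact hsol.2.2 q.1 q.2 (hq (by simp))
  have h2 : ∑ e ∈ M, ∑ q ∈ P.filter (fun q : V × V => s(q.1, q.2) = e), p q.1 q.2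
      = ∑ q ∈ P, p q.1 q.2 :=
    Finset.sum_fiberwise_of_maps_to (fun q hq => (Finset.mem_filter.mp hq).2) _
  rw [h1, ← h2, mWeight]
  refine Finset.sum_congr rfl ?_
  intro e he
  revert he
  induction e using Sym2.ind with
  | _ a b =>
    intro he
    have hab : a ≠ b := (G.ne_of_adj (hsol.1.1 _ he))
    have hfib : P.filter (fun q : V × V => s(q.1, q.2) = s(a, b))
        = {(a, b), (b, a)} := by
      ext ⟨i, j⟩
      simp only [hP, Finset.mem_filter, Finset.mem_product, Finset.mem_univ, true_and,
        Finset.mem_insert, Finset.mem_singleton, Prod.mk.injEq]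
      constructor
      · rintro ⟨-, hij⟩
        rcases Sym2.eq_iff.mp hij with ⟨h1, h2⟩ | ⟨h1, h2⟩
        · exact Or.inl ⟨h1, h2⟩
        · exact Or.inr ⟨h1, h2⟩
      · rintro (⟨h1, h2⟩ | ⟨h1, h2⟩) <;> subst h1 <;> subst h2
        · exact ⟨he, rfl⟩
        · exact ⟨by rwa [Sym2.eq_swap], Sym2.eq_swap⟩
    rw [hfib, Finset.sum_pair (by simp [hab, Ne.symm hab])]
    exact (hsol.2.1 a b he).2.2

/-- The key lemma: under a stable solution, the weight of any matching inside `S`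
is at most the total pay-off of `S`. -/
lemma matching_weight_le (hst : IsStable G w M p) {S : Finset V}
    {M' : Finset (Sym2 V)} (hm : IsMatching G M') (he : EdgesIn S M') :
    mWeight w M' ≤ ∑ i ∈ S, totalPayoff p i := by
  classical
  obtain ⟨hsol, hstab⟩ := hst
  set vs : Sym2 V → Finset V := fun e => S.filter (· ∈ e) with hvs
  have step1 : mWeight w M' ≤ ∑ e ∈ M', ∑ v ∈ vs e, totalPayoff p v := by
    refine Finset.sum_le_sum ?_
    intro e heM
    revert heM
    induction e using Sym2.ind with
    | _ a b =>
      intro heM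
      have hadj : G.Adj a b := hm.1 _ heM
      have hab : a ≠ b := G.ne_of_adj hadj
      have hvseq : vs s(a, b) = {a, b} := by
        ext v
        simp only [hvs, Finset.mem_filter, Sym2.mem_iff, Finset.mem_insert,
          Finset.mem_singleton]
        constructor
        · rintro ⟨-, h⟩; exact h
        · rintro (rfl | rfl)
          · exact ⟨he _ heM v (by simp), Or.inl rfl⟩
          · exact ⟨he _ heM v (by simp), Or.inr rfl⟩
      rw [hvseq, Finset.sum_pair hab]
      by_cases hmem : s(a, b) ∈ M
      · calc w s(a, b) = p a b + p b a := ((hsol.2.1 a b hmem).2.2).symm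
          _ ≤ totalPayoff p a + totalPayoff p b :=
            add_le_add (payoff_le_total hsol a b) (payoff_le_total hsol b a)
      · exact hstab a b hadj hmem
  have hdisj : (M' : Set (Sym2 V)).PairwiseDisjoint vs := by
    intro e heM f hfM hef
    simp only [Function.onFun]
    rw [Finset.disjoint_left]
    intro v hv1 hv2
    rw [hvs] at hv1 hv2
    simp only [Finset.mem_filter] at hv1 hv2
    exact hm.2 e heM f hfM hef v hv1.2 hv2.2
  have step2 : ∑ e ∈ M', ∑ v ∈ vs e, totalPayoff p v
      = ∑ v ∈ M'.biUnion vs, totalPayoff p v := (Finset.sum_biUnion hdisj).symm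
  have step3 : ∑ v ∈ M'.biUnion vs, totalPayoff p v ≤ ∑ i ∈ S, totalPayoff p i := by
    refine Finset.sum_le_sum_of_subset_of_nonneg ?_
      (fun i _ _ => totalPayoff_nonneg hsol i)
    intro v hv
    obtain ⟨e, -, hve⟩ := Finset.mem_biUnion.mp hv
    exact (Finset.mem_filter.mp hve).1
  exact step1.trans (step2.trans_le step3)

lemma empty_mem_vals (G : SimpleGraph V) (w : Sym2 V → ℝ) (S : Finset V) :
    (0 : ℝ) ∈ {t | ∃ M : Finset (Sym2 V), IsMatching G M ∧ EdgesIn S M ∧ t = mWeight w M} :=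
  ⟨∅, ⟨fun e he => absurd he (Finset.notMem_empty e),
    fun e he => absurd he (Finset.notMem_empty e)⟩,
    fun e he => absurd he (Finset.notMem_empty e), by simp [mWeight]⟩

end Aux

/-- a solution `(M,p)` for an instance `(G,w)` of Stable Roommates with
Payments is stable if and only if `M` is a maximum weight matching of `G` and the total
pay-off vector `p^t` is a core allocation of the matching game on `(G,w)`. -/
theorem statement6 [Fintype V] (G : SimpleGraph V) (w : Sym2 V → ℝ)
    (hw : ∀ e ∈ G.edgeSet, 0 < w e) (M : Finset (Sym2 V)) (p : V → V → ℝ)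
    (hsol : IsSolution G w M p) :
    IsStable G w M p ↔
      (mWeight w M = matchVal G w Finset.univ ∧
        InCore (matchVal G w) (totalPayoff p)) := by
  classical
  have hsum : (∑ i, totalPayoff p i) = mWeight w M := sum_totalPayoff hsol
  constructor
  · intro hst
    -- stability bounds every matching weight by total payoff
    have hub : ∀ S : Finset V,
        ∀ t ∈ {t | ∃ M' : Finset (Sym2 V), IsMatching G M' ∧ EdgesIn S M' ∧
          t = mWeight w M'}, t ≤ ∑ i ∈ S, totalPayoff p i := by
      rintro S t ⟨M', hm, he, rfl⟩
      exact matching_weight_le hst hm he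
    have hSnn : ∀ S : Finset V, (0 : ℝ) ≤ ∑ i ∈ S, totalPayoff p i :=
      fun S => Finset.sum_nonneg fun i _ => totalPayoff_nonneg hsol i
    have hle : ∀ S : Finset V, matchVal G w S ≤ ∑ i ∈ S, totalPayoff p i :=
      fun S => Real.sSup_le (hub S) (hSnn S)
    have hMmem : mWeight w M ∈ {t | ∃ M' : Finset (Sym2 V), IsMatching G M' ∧
        EdgesIn Finset.univ M' ∧ t = mWeight w M'} :=
      ⟨M, hsol.1, fun e _ v _ => Finset.mem_univ v, rfl⟩
    have hge : mWeight w M ≤ matchVal G w Finset.univ :=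
      le_csSup ⟨∑ i, totalPayoff p i, fun t ht => by
        simpa using hub Finset.univ t (by simpa using ht)⟩ hMmem
    have heq : mWeight w M = matchVal G w Finset.univ := by
      refine le_antisymm hge ?_
      calc matchVal G w Finset.univ ≤ ∑ i ∈ Finset.univ, totalPayoff p i :=
            hle Finset.univ
        _ = mWeight w M := hsum
    exact ⟨heq, by rw [hsum, heq], hle⟩
  · rintro ⟨hmax, hcore⟩
    refine ⟨hsol, ?_⟩
    intro i j hadj hnot
    have hij : i ≠ j := G.ne_of_adj hadj
    have hije : s(i, j) ∈ G.edgeSet := hadj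
    -- the singleton matching {s(i,j)} lies in the coalition {i,j}
    have hmem : w s(i, j) ∈ {t | ∃ M' : Finset (Sym2 V), IsMatching G M' ∧
        EdgesIn ({i, j} : Finset V) M' ∧ t = mWeight w M'} := by
      refine ⟨{s(i, j)}, ⟨?_, ?_⟩, ?_, ?_⟩
      · intro e he
        rw [Finset.mem_singleton] at he
        subst he; exact hije
      · intro e he f hf hef
        rw [Finset.mem_singleton] at he hf
        exact absurd (he.trans hf.symm) hef
      · intro e he v hv
        rw [Finset.mem_singleton] at he
        subst he
        rcases Sym2.mem_iff.mp hv with rfl | rfl <;> simp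
      · simp [mWeight]
    -- and every matching inside {i,j} has weight at most w(ij)
    have hbdd : ∀ t ∈ {t | ∃ M' : Finset (Sym2 V), IsMatching G M' ∧
        EdgesIn ({i, j} : Finset V) M' ∧ t = mWeight w M'}, t ≤ w s(i, j) := by
      rintro t ⟨M', hm, he, rfl⟩
      have hsub : M' ⊆ {s(i, j)} := by
        intro e heM
        rw [Finset.mem_singleton]
        have heE := hm.1 _ heM
        revert heE
        induction e using Sym2.ind with
        | _ a b =>
          intro heE
          have hab : a ≠ b := G.ne_of_adj heE
          have ha : a ∈ ({i, j} : Finset V) := he _ heM a (by simp)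
          have hb : b ∈ ({i, j} : Finset V) := he _ heM b (by simp)
          simp only [Finset.mem_insert, Finset.mem_singleton] at ha hb
          rcases ha with rfl | rfl <;> rcases hb with rfl | rfl
          · exact absurd rfl hab
          · rfl
          · exact Sym2.eq_swap
          · exact absurd rfl hab
      calc mWeight w M' = ∑ e ∈ M', w e := rfl
        _ ≤ ∑ e ∈ ({s(i, j)} : Finset (Sym2 V)), w e := by
            refine Finset.sum_le_sum_of_subset_of_nonneg hsub ?_
            intro e heIJ _
            rw [Finset.mem_singleton] at heIJ
            subst heIJ
            exact (hw _ hije).le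
        _ = w s(i, j) := Finset.sum_singleton _ _
    have h1 : w s(i, j) ≤ matchVal G w {i, j} :=
      le_csSup ⟨w s(i, j), hbdd⟩ hmem
    have h2 : matchVal G w {i, j} ≤ ∑ k ∈ ({i, j} : Finset V), totalPayoff p k :=
      hcore.2 {i, j}
    rw [Finset.sum_pair hij] at h2
    exact h1.trans h2

end MatchingGames
end
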